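/- arXiv:1410.4954 — 6 statements merged into one kernel-verified Lean document; each statement's English description precedes it below -/
import Mathlib

section
/- For any integers p,q and positive integer k, ∑_{j=0}^{k−1} ⌊(j−p)/k⌋·⌊(j−q)/k⌋ = min(p mod k, q mod k) + ⌊p/k⌋⌊q/k⌋·k + ⌊p/k⌋(q mod k) + ⌊q/k⌋(p mod k). -/
/-!
For `0 ≤ j < k` one has `⌊(j - p)/k⌋ = -⌊p/k⌋ - [j < p mod k]`, so each summand expands into
`⌊p/k⌋⌊q/k⌋ + ⌊p/k⌋[j < q mod k] + ⌊q/k⌋[j < p mod k] + [j < min (p mod k) (q mod k)]`,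
and summing an indicator `[j < r]` over `0 ≤ j < k` counts `r` when `0 ≤ r ≤ k`.
-/

open Finset

lemma Int.sub_ediv_of_nonneg_of_lt {k j : ℤ} (p : ℤ) (hk : 0 < k) (hj₀ : 0 ≤ j) (hjk : j < k) :
    (j - p) / k = -(p / k) - if j < p % k then 1 else 0 := by
  have hp := Int.emod_def p k
  have hr₀ := Int.emod_nonneg p hk.ne'
  have hrk := Int.emod_lt_of_pos p hk
  split_ifs with hjr
  · exact ((Int.ediv_emod_unique (r := j - p % k + k) hk).2
      ⟨by rw [hp]; ring, by omega, by omega⟩).1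
  · exact ((Int.ediv_emod_unique (r := j - p % k) hk).2
      ⟨by rw [hp]; ring, by omega, by omega⟩).1

lemma Finset.sum_range_ite_lt (k : ℕ) (r : ℤ) :
    ∑ j ∈ range k, (if (j : ℤ) < r then (1 : ℤ) else 0) = max 0 (min r k) := by
  induction k with
  | zero => simp
  | succ n ih =>
    rw [sum_range_succ, ih]
    push_cast
    split_ifs <;> omega

lemma Finset.sum_range_ite_lt_of_le {k : ℕ} {r : ℤ} (hr₀ : 0 ≤ r) (hrk : r ≤ k) :
    ∑ j ∈ range k, (if (j : ℤ) < r then (1 : ℤ) else 0) = r := by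
  rw [sum_range_ite_lt]; omega

theorem floor_prod_sum (k : ℕ) (hk : 0 < k) (p q : ℤ) :
    ∑ j ∈ Finset.range k,
        Int.fdiv ((j : ℤ) - p) (k : ℤ) * Int.fdiv ((j : ℤ) - q) (k : ℤ)
      = min (p % (k : ℤ)) (q % (k : ℤ))
        + Int.fdiv p (k : ℤ) * Int.fdiv q (k : ℤ) * (k : ℤ)
        + Int.fdiv p (k : ℤ) * (q % (k : ℤ))
        + Int.fdiv q (k : ℤ) * (p % (k : ℤ)) := by
  have hk' : (0 : ℤ) < k := by exact_mod_cast hk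
  simp only [Int.fdiv_eq_ediv_of_nonneg _ hk'.le]
  have hterm : ∀ j ∈ range k, ((j : ℤ) - p) / k * (((j : ℤ) - q) / k)
      = p / k * (q / k) + p / k * (if (j : ℤ) < q % k then 1 else 0)
        + q / k * (if (j : ℤ) < p % k then 1 else 0)
        + if (j : ℤ) < min (p % k) (q % k) then 1 else 0 := by
    intro j hj
    have hjk : (j : ℤ) < k := by exact_mod_cast mem_range.1 hj
    rw [Int.sub_ediv_of_nonneg_of_lt p hk' j.cast_nonneg hjk,
      Int.sub_ediv_of_nonneg_of_lt q hk' j.cast_nonneg hjk]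
    split_ifs <;> grind
  have hp₀ := Int.emod_nonneg p hk'.ne'
  have hq₀ := Int.emod_nonneg q hk'.ne'
  have hpk := Int.emod_lt_of_pos p hk'
  have hqk := Int.emod_lt_of_pos q hk'
  rw [sum_congr rfl hterm]
  simp only [sum_add_distrib, sum_const, card_range, nsmul_eq_mul, ← mul_sum]
  rw [sum_range_ite_lt_of_le hp₀ hpk.le, sum_range_ite_lt_of_le hq₀ hqk.le,
    sum_range_ite_lt_of_le (le_min hp₀ hq₀) (min_le_left _ _ |>.trans hpk.le)]
  ring
end

section
/- For any real w and positive integer k, ∑_{j=0}^{k−1} saw((j+w)/k) = saw(w), where saw(x) = x − ⌊x⌋ − 1/2 + (1/2)·δ(x) and δ(x)=1 if x is an integer, 0 otherwise. -/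
/-!
Writing `saw x = (fract x - fract (-x)) / 2`, the theorem follows from the multiplication formula
`∑ j < k, fract ((j + w) / k) = fract w + (k - 1) / 2` applied at `w` and, after reflecting
`j ↦ k - 1 - j`, at `1 - k - w`. In the multiplication formula, the sum minus `fract w` is
`1`-periodic in `w` (shifting `w` by `1` permutes the summands cyclically), so it suffices to take
`0 ≤ w < 1`; then no summand wraps around and the sum is `(k (k - 1) / 2 + k w) / k`.
-/

open Classical in
/-- The saw-tooth function `saw x = x - ⌊x⌋ - 1/2 + δ(x)/2`, where `δ(x) = 1` iff `x ∈ ℤ`. -/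
noncomputable def saw (x : ℝ) : ℝ :=
  x - Int.floor x - 1/2 + (if ∃ m : ℤ, (m : ℝ) = x then (1:ℝ)/2 else 0)

open Finset Int

theorem sum_range_natCast_mul_two {R : Type*} [CommRing R] (n : ℕ) :
    (∑ i ∈ range n, (i : R)) * 2 = n * (n - 1) := by
  induction n with
  | zero => simp
  | succ n ih => rw [sum_range_succ, add_mul, ih]; push_cast; ring

section MultiplicationFormula

variable {R : Type*} [Field R] [LinearOrder R] [IsStrictOrderedRing R] [FloorRing R]

theorem periodic_sum_range_fract_add_div_sub_fract (k : ℕ) :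
    Function.Periodic (fun w : R => ∑ j ∈ range k, fract ((j + w) / k) - fract w) 1 := by
  intro w
  have hwrap : fract ((k + w) / k : R) = fract (((0 : ℕ) + w) / k) := by
    rcases k.eq_zero_or_pos with rfl | hk
    · simp
    · rw [add_div, div_self (by positivity), Nat.cast_zero, zero_add, fract_one_add]
  have hshift := sum_range_succ' (fun j : ℕ => fract ((j + w) / k : R)) k
  rw [sum_range_succ, hwrap, add_left_inj] at hshift
  simp only [Nat.cast_succ, add_right_comm _ (1 : R), add_assoc] at hshift ⊢
  rw [← hshift, fract_add_one]

theorem sum_range_fract_add_div {k : ℕ} (hk : 0 < k) (w : R) :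
    ∑ j ∈ range k, fract ((j + w) / k) = fract w + (k - 1) / 2 := by
  have hk' : (0 : R) < k := by exact_mod_cast hk
  have hreduce :=
    (periodic_sum_range_fract_add_div_sub_fract (R := R) k).sub_int_mul_eq (x := w) ⌊w⌋
  simp only [mul_one, self_sub_floor, fract_fract] at hreduce
  rw [← sub_eq_iff_eq_add', ← hreduce]
  have hno_wrap : ∀ j ∈ Finset.range k, fract ((j + fract w) / k) = (j + fract w) / k := by
    intro j hj
    refine fract_eq_self.2 ⟨by positivity, (div_lt_one hk').2 ?_⟩
    have : (j : R) + 1 ≤ k := by exact_mod_cast mem_range.1 hj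
    linarith [fract_lt_one w]
  rw [sum_congr rfl hno_wrap, ← sum_div, sum_add_distrib, sum_const, card_range, nsmul_eq_mul]
  field_simp
  linear_combination sum_range_natCast_mul_two (R := R) k

theorem sum_range_fract_neg_add_div {k : ℕ} (hk : 0 < k) (w : R) :
    ∑ j ∈ range k, fract (-((j + w) / k)) = fract (-w) + (k - 1) / 2 := by
  rw [← sum_range_reflect, ← fract_add_one, ← fract_sub_natCast _ k,
    ← sum_range_fract_add_div hk]
  refine sum_congr rfl fun j hj => ?_
  have hj : j + 1 ≤ k := mem_range.1 hj
  rw [Nat.cast_sub (by omega), Nat.cast_sub (by omega)]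
  congr 1
  field_simp
  ring

end MultiplicationFormula

theorem saw_eq_fract_sub_fract_neg (x : ℝ) : saw x = (fract x - fract (-x)) / 2 := by
  by_cases hx : ∃ m : ℤ, (m : ℝ) = x
  · obtain ⟨m, rfl⟩ := hx
    simp [saw, ← Int.cast_neg]
  · have hfract : fract x ≠ 0 := fract_ne_zero_iff.2 hx
    rw [saw, if_neg hx, fract_neg hfract, fract]
    ring

theorem saw_sum_shift (k : ℕ) (hk : 0 < k) (w : ℝ) :
    ∑ j ∈ Finset.range k, saw (((j : ℝ) + w) / (k : ℝ)) = saw w := by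
  simp only [saw_eq_fract_sub_fract_neg, ← sum_div, sum_sub_distrib, sum_range_fract_add_div hk,
    sum_range_fract_neg_add_div hk]
  ring
end

section
/- Let k=2^n with n≥1 and let b be a nonnegative integer. Then 4·∑_{j=0}^{k/2−1} saw((j−b)/k) equals 2(b mod k) − k/2 + 1 if 0 ≤ b mod k < k/2, and equals −2(b mod k) + 3k/2 − 1 if b mod k ≥ k/2. -/
/-!
On `[0, 1)` the saw-tooth is `x - 1/2`, except `saw 0 = 0`, and it is `1`-periodic. So for
`m = b % k` and `j < k`, `saw ((j - b) / k)` is `(j - m) / k - 1/2`, plus `1` when `j < m`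
(shift by one period) and plus `1/2` when `j = m`. Summing over `j < k/2` leaves a Gauss sum,
the count `min m (k/2)` and the indicator of `m < k/2`.
-/

open Finset

open Classical in
lemma saw_add_intCast (x : ℝ) (z : ℤ) : saw (x + z) = saw x := by
  have hint : (∃ m : ℤ, (m : ℝ) = x + z) ↔ ∃ m : ℤ, (m : ℝ) = x :=
    ⟨fun ⟨m, hm⟩ => ⟨m - z, by push_cast; linarith⟩,
      fun ⟨m, hm⟩ => ⟨m + z, by push_cast; linarith⟩⟩
  rw [saw, saw, if_congr hint rfl rfl, Int.floor_add_intCast]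
  push_cast
  ring

open Classical in
lemma saw_of_mem_Ico {x : ℝ} (hx : x ∈ Set.Ico 0 1) :
    saw x = x - 1/2 + if x = 0 then 1/2 else 0 := by
  have hint : (∃ m : ℤ, (m : ℝ) = x) ↔ x = 0 := by
    refine ⟨fun ⟨m, hm⟩ => ?_, fun h => ⟨0, by simp [h]⟩⟩
    have : m = 0 := by
      rw [← Int.floor_eq_zero_iff.mpr hx, ← hm, Int.floor_intCast]
    simp [← hm, this]
  rw [saw, if_congr hint rfl rfl, Int.floor_eq_zero_iff.mpr hx]
  push_cast
  ring

lemma saw_natCast_sub_div {c j m : ℕ} (hj : j < c) (hm : m < c) :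
    saw (((j : ℝ) - m) / c) = ((j : ℝ) - m) / c - 1/2
      + (if j < m then 1 else 0) + (if j = m then 1/2 else 0) := by
  have hc : (0 : ℝ) < c := by exact_mod_cast hm.pos
  have hjc : (j : ℝ) < c := by exact_mod_cast hj
  have hmc : (m : ℝ) < c := by exact_mod_cast hm
  rcases lt_or_ge j m with hjm | hmj
  · have hjm' : (j : ℝ) < m := by exact_mod_cast hjm
    have hx : ((j : ℝ) - m) / c + 1 ∈ Set.Ico 0 1 := by
      rw [div_add_one hc.ne', Set.mem_Ico, div_lt_one hc]
      exact ⟨div_nonneg (by linarith) hc.le, by linarith⟩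
    have hx0 : ((j : ℝ) - m) / c + 1 ≠ 0 := by
      rw [div_add_one hc.ne']; exact (div_pos (by linarith) hc).ne'
    rw [← saw_add_intCast _ 1, Int.cast_one, saw_of_mem_Ico hx, if_neg hx0, if_pos hjm,
      if_neg hjm.ne]
    ring
  · have hmj' : (m : ℝ) ≤ j := by exact_mod_cast hmj
    have hx : ((j : ℝ) - m) / c ∈ Set.Ico 0 1 := by
      rw [Set.mem_Ico, div_lt_one hc]
      exact ⟨div_nonneg (by linarith) hc.le, by linarith⟩
    have hx0 : ((j : ℝ) - m) / c = 0 ↔ j = m := by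
      rw [div_eq_zero_iff, sub_eq_zero, Nat.cast_inj]; simp [hc.ne']
    rw [saw_of_mem_Ico hx, if_congr hx0 rfl rfl, if_neg hmj.not_gt]
    ring

lemma saw_natCast_sub_div_mod (c j b : ℕ) :
    saw (((j : ℝ) - b) / c) = saw (((j : ℝ) - (b % c : ℕ)) / c) := by
  rcases Nat.eq_zero_or_pos c with rfl | hc
  · simp
  have hb : (b : ℝ) = (b % c : ℕ) + c * (b / c : ℕ) := by
    exact_mod_cast (Nat.mod_add_div b c).symm
  have hshift : ((j : ℝ) - b) / c = ((j : ℝ) - (b % c : ℕ)) / c + ((-(b / c : ℕ) : ℤ) : ℝ) := by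
    rw [hb, Int.cast_neg, Int.cast_natCast]
    field_simp
    ring
  rw [hshift, saw_add_intCast]

lemma sum_range_natCast_mul_two_s10 (L : ℕ) :
    (∑ j ∈ range L, (j : ℝ)) * 2 = L * (L - 1) := by
  induction L with
  | zero => simp
  | succ L ih => rw [sum_range_succ, add_mul, ih]; push_cast; ring

lemma sum_range_saw_natCast_sub_div {c L m : ℕ} (hL : L ≤ c) (hm : m < c) :
    ∑ j ∈ range L, saw (((j : ℝ) - m) / c)
      = ((L : ℝ) * (L - 1) / 2 - L * m) / c - L / 2 + (min m L : ℕ)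
        + if m < L then 1/2 else 0 := by
  rw [sum_congr rfl fun j hj => saw_natCast_sub_div ((mem_range.mp hj).trans_le hL) hm]
  have hlt : ∑ j ∈ range L, (if j < m then (1 : ℝ) else 0) = (min m L : ℕ) := by
    rw [sum_boole, show (range L).filter (· < m) = range (min m L) by ext; simp; omega,
      card_range]
  have heq : ∑ j ∈ range L, (if j = m then (1 / 2 : ℝ) else 0) = if m < L then 1/2 else 0 := by
    simp only [sum_ite_eq', mem_range]
  simp only [sum_add_distrib, sum_sub_distrib, ← sum_div, hlt, heq, sum_const, card_range,
    nsmul_eq_mul]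
  linear_combination (sum_range_natCast_mul_two_s10 L) / (2 * c)

theorem saw_half_sum (n k : ℕ) (hn : 1 ≤ n) (hk : k = 2 ^ n) (b : ℕ) :
    4 * ∑ j ∈ Finset.range (k / 2), saw (((j : ℝ) - (b : ℝ)) / (k : ℝ))
      = if b % k < k / 2 then 2 * ((b % k : ℕ) : ℝ) - (k : ℝ) / 2 + 1
        else -2 * ((b % k : ℕ) : ℝ) + 3 * (k : ℝ) / 2 - 1 := by
  have hk_even : 2 * (k / 2) = k :=
    Nat.two_mul_div_two_of_even (hk ▸ Nat.even_pow.mpr ⟨even_two, by omega⟩)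
  have hm : b % k < k := Nat.mod_lt _ (by rw [hk]; positivity)
  rw [sum_congr rfl fun j _ => saw_natCast_sub_div_mod k j b,
    sum_range_saw_natCast_sub_div (by omega) hm]
  have hkR : (k : ℝ) = 2 * (k / 2 : ℕ) := by exact_mod_cast hk_even.symm
  have hK : (0 : ℝ) < (k / 2 : ℕ) := by exact_mod_cast (by omega : 0 < k / 2)
  split_ifs with hmK
  · rw [min_eq_left hmK.le, hkR]
    field_simp
    ring
  · rw [min_eq_right (not_lt.mp hmK), hkR]
    field_simp
    ring
end

section
/- For k=2^n, ∑_{j=0}^{k−1} saw(j²/k) = −√k + 3/2 if n is even, and −3√(k/8) + 3/2 if n is odd. -/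
/-!
Since `saw (a / k) = (a mod k) / k - 1/2 + [k ∣ a] / 2` and `2ⁿ ∣ j²` iff `2^⌈n/2⌉ ∣ j`, the sum
equals `S n / 2ⁿ - 2ⁿ / 2 + 2^⌊n/2⌋ / 2`, where `S n = ∑_{j < 2ⁿ} (j² mod 2ⁿ)`. Splitting `j`
by parity gives `S (n + 2) = 8 S n + 8 U n + 2ⁿ⁺¹` with `U n = ∑_{j < 2ⁿ} (j² + j mod 2ⁿ)`, and
again by parity `U (n + 1) = 2 ∑_{s < 2ⁿ} (2s² + s mod 2ⁿ) + 2 ∑_{s < 2ⁿ} (2s² + 3s + 1 mod 2ⁿ)`.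
Both quadratics permute `ℤ/2ⁿ`, since `f t - f s = (t - s)(2(t + s) + b)` with `b` odd, so each
sum is `∑_{x < 2ⁿ} x`. Solving the recursion along even and odd `n` gives closed forms for `S n`.
-/

open Finset

theorem saw_natCast_div (a : ℕ) {k : ℕ} (hk : k ≠ 0) :
    saw ((a : ℝ) / k) = ((a % k : ℕ) : ℝ) / k - 1 / 2 + if k ∣ a then 1 / 2 else 0 := by
  have hint : (∃ m : ℤ, (m : ℝ) = a / k) ↔ k ∣ a := by
    rw [← Set.mem_range, ← Int.fract_eq_zero_iff, Int.fract_div_natCast_eq_div_natCast_mod,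
      div_eq_zero_iff, Nat.dvd_iff_mod_eq_zero]
    simp [hk]
  rw [saw, Int.self_sub_floor, Int.fract_div_natCast_eq_div_natCast_mod]
  simp only [hint]

theorem Nat.Prime.pow_dvd_sq_iff {p : ℕ} (hp : p.Prime) (n j : ℕ) :
    p ^ n ∣ j ^ 2 ↔ p ^ ((n + 1) / 2) ∣ j := by
  rcases eq_or_ne j 0 with rfl | hj
  · simp
  rw [hp.pow_dvd_iff_le_factorization (pow_ne_zero _ hj), hp.pow_dvd_iff_le_factorization hj,
    Nat.factorization_pow, Finsupp.smul_apply, smul_eq_mul]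
  omega

theorem card_filter_dvd_range_mul {d : ℕ} (hd : d ≠ 0) (K : ℕ) :
    #{j ∈ range (d * K) | d ∣ j} = K := by
  have : {j ∈ range (d * K) | d ∣ j} = (range K).image (d * ·) := by
    ext j
    simp only [mem_filter, mem_range, mem_image]
    constructor
    · rintro ⟨hj, c, rfl⟩
      exact ⟨c, Nat.lt_of_mul_lt_mul_left hj, rfl⟩
    · rintro ⟨c, hc, rfl⟩
      exact ⟨Nat.mul_lt_mul_of_pos_left hc (Nat.pos_of_ne_zero hd), dvd_mul_right d c⟩
  rw [this, card_image_of_injective _ (mul_right_injective₀ hd), card_range]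

theorem sum_range_two_mul {M : Type*} [AddCommMonoid M] (f : ℕ → M) (K : ℕ) :
    ∑ j ∈ range (2 * K), f j = ∑ s ∈ range K, (f (2 * s) + f (2 * s + 1)) := by
  induction K with
  | zero => simp
  | succ K ih =>
    rw [sum_range_succ _ K, ← ih, mul_add_one, sum_range_succ, sum_range_succ, add_assoc]

theorem sum_range_two_mul_of_periodic {M : Type*} [AddCommMonoid M] {f : ℕ → M} {K : ℕ}
    (hf : Function.Periodic f K) : ∑ s ∈ range (2 * K), f s = 2 • ∑ s ∈ range K, f s := by
  rw [two_mul, sum_range_add, two_nsmul]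
  exact congrArg _ (sum_congr rfl fun s _ => by rw [add_comm, hf])

theorem sum_mod_eq_sum_range_of_injOn {f : ℕ → ℕ} {k : ℕ} (hk : k ≠ 0)
    (hf : Set.InjOn (fun s => f s % k) (range k)) :
    ∑ s ∈ range k, f s % k = ∑ x ∈ range k, x := by
  have hmaps : Set.MapsTo (fun s => f s % k) (range k) (range k) :=
    fun s _ => mem_range.2 (Nat.mod_lt _ (Nat.pos_of_ne_zero hk))
  exact sum_nbij _ hmaps hf (surjOn_of_injOn_of_card_le _ hmaps hf le_rfl) fun _ _ => rfl

theorem injOn_two_mul_sq_add_odd_mod_two_pow (a c p : ℕ) {b : ℕ} (hb : Odd b) :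
    Set.InjOn (fun s => (2 * a * s ^ 2 + b * s + c) % 2 ^ p) (range (2 ^ p)) := by
  intro s hs t ht hst
  simp only [coe_range, Set.mem_Iio] at hs ht hst
  have hdvd : (2 ^ p : ℤ) ∣ (t - s) * (2 * a * (t + s) + b) := by
    convert (Nat.ModEq.dvd hst) using 1 <;> push_cast <;> ring
  have hcop : IsCoprime (2 ^ p : ℤ) (2 * a * (t + s) + b) := by
    refine IsCoprime.pow_left ?_
    rw [Int.prime_two.coprime_iff_not_dvd, ← even_iff_two_dvd, Int.not_even_iff_odd]
    exact ((even_two.mul_right _).mul_right _).add_odd (by exact_mod_cast hb)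
  have hs' : (s : ℤ) < 2 ^ p := by exact_mod_cast hs
  have ht' : (t : ℤ) < 2 ^ p := by exact_mod_cast ht
  have := Int.eq_zero_of_abs_lt_dvd (hcop.dvd_of_dvd_mul_right hdvd)
    (abs_sub_lt_iff.2 ⟨by linarith, by linarith⟩)
  omega

theorem Nat.mul_add_mod_mul_of_lt {a r : ℕ} (h : r < a) (y N : ℕ) :
    (a * y + r) % (a * N) = a * (y % N) + r := by
  rw [Nat.mod_mul, Nat.mul_add_mod, Nat.mod_eq_of_lt h, Nat.mul_add_div (by omega),
    Nat.div_eq_of_lt h, add_zero, add_comm]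

def sqModSum (n : ℕ) : ℕ := ∑ j ∈ range (2 ^ n), j ^ 2 % 2 ^ n

def pronicModSum (n : ℕ) : ℕ := ∑ j ∈ range (2 ^ n), (j ^ 2 + j) % 2 ^ n

theorem pronicModSum_succ (p : ℕ) : pronicModSum (p + 1) = 2 * (2 ^ p * (2 ^ p - 1)) := by
  have hpair (s : ℕ) :
      ((2 * s) ^ 2 + 2 * s) % (2 * 2 ^ p) + ((2 * s + 1) ^ 2 + (2 * s + 1)) % (2 * 2 ^ p)
        = 2 * ((2 * s ^ 2 + s) % 2 ^ p) + 2 * ((2 * s ^ 2 + 3 * s + 1) % 2 ^ p) := by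
    rw [show (2 * s) ^ 2 + 2 * s = 2 * (2 * s ^ 2 + s) by ring,
      show (2 * s + 1) ^ 2 + (2 * s + 1) = 2 * (2 * s ^ 2 + 3 * s + 1) by ring,
      Nat.mul_mod_mul_left, Nat.mul_mod_mul_left]
  have h2p : 2 ^ p ≠ 0 := by positivity
  rw [pronicModSum, pow_succ', sum_range_two_mul]
  simp only [hpair, sum_add_distrib, ← mul_sum]
  rw [sum_mod_eq_sum_range_of_injOn h2p
      (by simpa using injOn_two_mul_sq_add_odd_mod_two_pow 1 0 p odd_one),
    sum_mod_eq_sum_range_of_injOn h2p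
      (by simpa using injOn_two_mul_sq_add_odd_mod_two_pow 1 1 p (by decide : Odd 3)),
    ← sum_range_id_mul_two]
  ring

theorem sqModSum_add_two (n : ℕ) :
    sqModSum (n + 2) = 8 * sqModSum n + 8 * pronicModSum n + 2 ^ (n + 1) := by
  have hshift (s : ℕ) : s + 2 ^ n ≡ s [MOD 2 ^ n] := Nat.add_mod_right s (2 ^ n)
  have hsq : Function.Periodic (fun s => s ^ 2 % 2 ^ n) (2 ^ n) := fun s => (hshift s).pow 2
  have hpronic : Function.Periodic (fun s => (s ^ 2 + s) % 2 ^ n) (2 ^ n) := fun s =>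
    ((hshift s).pow 2).add (hshift s)
  have hpair (s : ℕ) : (2 * s) ^ 2 % (2 * 2 ^ (n + 1)) + (2 * s + 1) ^ 2 % (2 * 2 ^ (n + 1))
      = 4 * (s ^ 2 % 2 ^ n) + (4 * ((s ^ 2 + s) % 2 ^ n) + 1) := by
    rw [show (2 * s) ^ 2 = 4 * s ^ 2 by ring, show (2 * s + 1) ^ 2 = 4 * (s ^ 2 + s) + 1 by ring,
      show 2 * 2 ^ (n + 1) = 4 * 2 ^ n by ring, Nat.mul_mod_mul_left,
      Nat.mul_add_mod_mul_of_lt (by norm_num)]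
  rw [sqModSum, pow_succ' 2 (n + 1), sum_range_two_mul, sum_congr rfl fun s _ => hpair s,
    sum_add_distrib, sum_add_distrib, ← mul_sum, ← mul_sum, pow_succ' 2 n,
    sum_range_two_mul_of_periodic hsq, sum_range_two_mul_of_periodic hpronic, sum_const,
    card_range, smul_eq_mul, smul_eq_mul, smul_eq_mul, sqModSum, pronicModSum]
  ring

theorem sqModSum_two_mul_add_two (m : ℕ) :
    (sqModSum (2 * m + 2) : ℤ) = 8 * (2 ^ m) ^ 4 - 12 * (2 ^ m) ^ 3 + 6 * (2 ^ m) ^ 2 := by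
  induction m with
  | zero => decide
  | succ m ih =>
    rw [show 2 * (m + 1) + 2 = 2 * m + 2 + 2 by ring, sqModSum_add_two, pronicModSum_succ]
    push_cast [ih, Nat.one_le_two_pow]
    ring

theorem sqModSum_two_mul_add_one (m : ℕ) :
    (sqModSum (2 * m + 1) : ℤ) = 2 * (2 ^ m) ^ 4 - 4 * (2 ^ m) ^ 3 + 3 * (2 ^ m) ^ 2 := by
  induction m with
  | zero => decide
  | succ m ih =>
    rw [show 2 * (m + 1) + 1 = 2 * m + 1 + 2 by ring, sqModSum_add_two, pronicModSum_succ]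
    push_cast [ih, Nat.one_le_two_pow]
    ring

theorem sum_saw_sq_div_two_pow (n : ℕ) :
    ∑ j ∈ range (2 ^ n), saw ((j : ℝ) ^ 2 / 2 ^ n)
      = sqModSum n / 2 ^ n - 2 ^ n / 2 + 2 ^ (n / 2) / 2 := by
  have hterm (j : ℕ) : saw ((j : ℝ) ^ 2 / 2 ^ n)
      = ((j ^ 2 % 2 ^ n : ℕ) : ℝ) / 2 ^ n - 1 / 2
        + if 2 ^ ((n + 1) / 2) ∣ j then 1 / 2 else 0 := by
    have := saw_natCast_div (j ^ 2) (pow_ne_zero n two_ne_zero)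
    push_cast at this
    simp only [this, Nat.prime_two.pow_dvd_sq_iff]
  have hcount : #{j ∈ range (2 ^ n) | 2 ^ ((n + 1) / 2) ∣ j} = 2 ^ (n / 2) := by
    rw [← card_filter_dvd_range_mul (pow_ne_zero _ two_ne_zero) (2 ^ (n / 2)), ← pow_add,
      show (n + 1) / 2 + n / 2 = n by omega]
  simp only [hterm, sum_add_distrib, sum_sub_distrib, ← sum_div, sum_ite, sum_const_zero,
    sum_const, hcount, card_range, nsmul_eq_mul, sqModSum]
  push_cast
  ring

theorem sum_saw_sq_div_two_pow_two_mul_add_two (m : ℕ) :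
    ∑ j ∈ range (2 ^ (2 * m + 2)), saw ((j : ℝ) ^ 2 / 2 ^ (2 * m + 2))
      = -2 ^ (m + 1) + 3 / 2 := by
  have hS :
      (sqModSum (2 * m + 2) : ℝ) = 8 * (2 ^ m) ^ 4 - 12 * (2 ^ m) ^ 3 + 6 * (2 ^ m) ^ 2 := by
    exact_mod_cast sqModSum_two_mul_add_two m
  rw [sum_saw_sq_div_two_pow, hS, show (2 * m + 2) / 2 = m + 1 by omega]
  field_simp
  ring

theorem sum_saw_sq_div_two_pow_two_mul_add_one (m : ℕ) :
    ∑ j ∈ range (2 ^ (2 * m + 1)), saw ((j : ℝ) ^ 2 / 2 ^ (2 * m + 1))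
      = -3 * 2 ^ m / 2 + 3 / 2 := by
  have hS : (sqModSum (2 * m + 1) : ℝ) = 2 * (2 ^ m) ^ 4 - 4 * (2 ^ m) ^ 3 + 3 * (2 ^ m) ^ 2 := by
    exact_mod_cast sqModSum_two_mul_add_one m
  rw [sum_saw_sq_div_two_pow, hS, show (2 * m + 1) / 2 = m by omega]
  field_simp
  ring

theorem saw_sum_squares (n k : ℕ) (hn : 1 ≤ n) (hk : k = 2 ^ n) :
    ∑ j ∈ Finset.range k, saw (((j : ℝ) ^ 2) / (k : ℝ))
      = if Even n then -Real.sqrt (k : ℝ) + 3 / 2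
        else -3 * Real.sqrt ((k : ℝ) / 8) + 3 / 2 := by
  subst hk
  push_cast
  obtain ⟨m, rfl | rfl⟩ := Nat.even_or_odd' n
  · obtain ⟨m, rfl⟩ : ∃ m', m = m' + 1 := ⟨m - 1, by omega⟩
    rw [if_pos (even_two_mul _), show 2 * (m + 1) = 2 * m + 2 by ring,
      sum_saw_sq_div_two_pow_two_mul_add_two,
      show (2 : ℝ) ^ (2 * m + 2) = (2 ^ (m + 1)) ^ 2 by ring, Real.sqrt_sq (by positivity)]
  · rw [if_neg (Nat.not_even_two_mul_add_one m), sum_saw_sq_div_two_pow_two_mul_add_one,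
      show (2 : ℝ) ^ (2 * m + 1) / 8 = (2 ^ m / 2) ^ 2 by ring, Real.sqrt_sq (by positivity)]
    ring
end

section
/- For k=2^n, ∑_{j=0}^{k−1} ⌊j²/k⌋ = k²/3 − k + (3√k)/2 − 4/3 if n is even, and k²/3 − k + √(2k) − 4/3 if n is odd. -/
/-!
Let `A n = ∑_{j<2^n} ⌊j²/2^n⌋` and `B n = ∑_{q<2^n} ⌊q(q+1)/2^n⌋`. Splitting `j` by parity, with
`(2i)² = 4i²` and `(2i+1)² = 4i(i+1) + 1`, gives `A (n+2) + 2^n = 2 A n + 2 B n + 4^(n+1)`.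
`B` follows from `∑ q(q+1)` once the residues of `q(q+1)` modulo `N = 2^n` are known: for
`q < N/2` they are the even residues, each exactly once, and `q ↦ N-1-q` preserves them.
The square-root term solves the homogeneous recursion `c (n+2) = 2 c n`, fitted to `A 1 = 0`,
`A 2 = 3`.
-/

open Finset

lemma sum_range_two_mul_eq_sum_even_add_odd {M : Type*} [AddCommMonoid M] (f : ℕ → M) (N : ℕ) :
    ∑ j ∈ range (2 * N), f j = ∑ i ∈ range N, (f (2 * i) + f (2 * i + 1)) := by
  induction N with
  | zero => simp
  | succ N ih =>
    rw [show 2 * (N + 1) = 2 * N + 1 + 1 by ring, sum_range_succ, sum_range_succ, ih,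
      sum_range_succ, add_assoc]

lemma sum_range_two_mul_div {N : ℕ} (hN : 0 < N) (f g : ℕ → ℕ)
    (hfg : ∀ r, f (N + r) = f r + g r * N) :
    ∑ i ∈ range (2 * N), f i / N = 2 * ∑ r ∈ range N, f r / N + ∑ r ∈ range N, g r := by
  simp only [two_mul, sum_range_add, hfg, Nat.add_mul_div_right _ _ hN, sum_add_distrib]
  ring

lemma three_mul_sum_range_pronic_add (N : ℕ) :
    3 * ∑ q ∈ range N, q * (q + 1) + N = N ^ 3 := by
  induction N with
  | zero => simp
  | succ N ih =>
    rw [sum_range_succ]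
    linear_combination ih

lemma pronic_mod_reflect (p q : ℕ) : p * (p + 1) % (p + q + 1) = q * (q + 1) % (p + q + 1) := by
  rw [← Nat.add_mul_mod_self_left (p * (p + 1)) (p + q + 1) (2 * q + 1),
    ← Nat.add_mul_mod_self_left (q * (q + 1)) (p + q + 1) (p + q + 1)]
  ring_nf

lemma pronic_mod_injOn (k : ℕ) :
    Set.InjOn (fun q ↦ q * (q + 1) % 2 ^ (k + 1)) (range (2 ^ k)) := by
  intro a ha b hb hab
  wlog hle : a ≤ b generalizing a b
  · exact (this hb ha hab.symm (by omega)).symm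
  have ha : a < 2 ^ k := mem_range.1 ha
  have hb : b < 2 ^ k := mem_range.1 hb
  have hdvd : 2 ^ (k + 1) ∣ (b - a) * (a + b + 1) := by
    have := (Nat.modEq_iff_dvd' (Nat.mul_le_mul hle (Nat.succ_le_succ hle))).1 hab
    rwa [show b * (b + 1) - a * (a + 1) = (b - a) * (a + b + 1) by
      zify [hle, Nat.mul_le_mul hle (Nat.succ_le_succ hle)]; ring] at this
  -- `b - a` and `a + b + 1` have opposite parity, so the power of two divides one of them.
  rcases Nat.even_or_odd (b - a) with hev | hodd
  · have hodd : Odd (a + b + 1) := by obtain ⟨t, ht⟩ := hev; exact ⟨a + t, by omega⟩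
    have := (Nat.Coprime.pow_left _ hodd.coprime_two_left).dvd_of_dvd_mul_right hdvd
    rcases Nat.eq_zero_or_pos (b - a) with h0 | hpos
    · omega
    · have := Nat.le_of_dvd hpos this; omega
  · have := (Nat.Coprime.pow_left _ hodd.coprime_two_left).dvd_of_dvd_mul_left hdvd
    have := Nat.le_of_dvd (by omega) this
    rw [pow_succ] at this
    omega

lemma sum_range_pronic_mod_eq_sum_two_mul (k : ℕ) :
    ∑ q ∈ range (2 ^ k), q * (q + 1) % 2 ^ (k + 1) = ∑ t ∈ range (2 ^ k), 2 * t := by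
  have heven (q : ℕ) : 2 ∣ q * (q + 1) % 2 ^ (k + 1) :=
    (Nat.dvd_mod_iff (dvd_pow_self 2 k.succ_ne_zero)).2 (Nat.even_mul_succ_self q).two_dvd
  have hmaps :
      Set.MapsTo (fun q ↦ q * (q + 1) % 2 ^ (k + 1) / 2) (range (2 ^ k)) (range (2 ^ k)) := by
    intro q _
    have := Nat.mod_lt (q * (q + 1)) (pow_pos two_pos (k + 1))
    simp only [coe_range, Set.mem_Iio, pow_succ] at this ⊢
    omega
  have hinj : Set.InjOn (fun q ↦ q * (q + 1) % 2 ^ (k + 1) / 2) (range (2 ^ k)) := by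
    intro a ha b hb hab
    refine pronic_mod_injOn k ha hb ?_
    simp only at hab ⊢
    rw [← Nat.mul_div_cancel' (heven a), ← Nat.mul_div_cancel' (heven b), hab]
  refine sum_nbij _ hmaps hinj (surjOn_of_injOn_of_card_le _ hmaps hinj le_rfl) fun q _ ↦ ?_
  exact (Nat.mul_div_cancel' (heven q)).symm

lemma sum_range_pronic_mod (k : ℕ) :
    ∑ q ∈ range (2 ^ (k + 1)), q * (q + 1) % 2 ^ (k + 1) = 2 ^ (k + 1) * (2 ^ k - 1) := by
  have hreflect : ∑ q ∈ range (2 ^ k), (2 ^ k + q) * (2 ^ k + q + 1) % 2 ^ (k + 1)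
      = ∑ q ∈ range (2 ^ k), q * (q + 1) % 2 ^ (k + 1) := by
    rw [← sum_range_reflect]
    refine sum_congr rfl fun q hq ↦ ?_
    have hq : q < 2 ^ k := mem_range.1 hq
    have := pronic_mod_reflect (2 ^ k + (2 ^ k - 1 - q)) q
    rwa [show 2 ^ k + (2 ^ k - 1 - q) + q + 1 = 2 ^ (k + 1) by rw [pow_succ]; omega] at this
  rw [show range (2 ^ (k + 1)) = range (2 ^ k + 2 ^ k) by rw [pow_succ, mul_two], sum_range_add,
    hreflect, sum_range_pronic_mod_eq_sum_two_mul, ← mul_sum, pow_succ, mul_right_comm,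
    ← sum_range_id_mul_two]
  ring

def floorSqSum (n : ℕ) : ℕ := ∑ j ∈ range (2 ^ n), j ^ 2 / 2 ^ n

def floorPronicSum (n : ℕ) : ℕ := ∑ q ∈ range (2 ^ n), q * (q + 1) / 2 ^ n

lemma three_mul_floorPronicSum_succ (k : ℕ) :
    3 * floorPronicSum (k + 1) + 3 * 2 ^ k = 4 ^ (k + 1) + 2 := by
  set N := 2 ^ (k + 1) with hN
  have hdivmod : ∑ q ∈ range N, q * (q + 1) = N * floorPronicSum (k + 1) + N * (2 ^ k - 1) := by
    rw [← sum_range_pronic_mod, floorPronicSum, mul_sum, ← sum_add_distrib]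
    exact sum_congr rfl fun q _ ↦ (Nat.div_add_mod _ _).symm
  have hsum := three_mul_sum_range_pronic_add N
  rw [hdivmod] at hsum
  have h4 : (4 : ℤ) ^ (k + 1) = N ^ 2 := by
    rw [hN]; push_cast; rw [← pow_mul, mul_comm, pow_mul]; norm_num
  apply Nat.eq_of_mul_eq_mul_left (show 0 < N by positivity)
  zify [Nat.one_le_two_pow] at hsum ⊢
  linear_combination hsum - (N : ℤ) * h4

lemma floorSqSum_add_two (n : ℕ) :
    floorSqSum (n + 2) + 2 ^ n = 2 * floorSqSum n + 2 * floorPronicSum n + 4 ^ (n + 1) := by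
  have hN : 0 < 2 ^ n := by positivity
  have hdiv (j : ℕ) : j ^ 2 / 2 ^ (n + 2) = j ^ 2 / 4 / 2 ^ n := by
    rw [Nat.div_div_eq_div_mul, pow_add, mul_comm]; norm_num
  have heven (i : ℕ) : (2 * i) ^ 2 / 4 = i ^ 2 := by
    rw [mul_pow]; norm_num
  have hodd (i : ℕ) : (2 * i + 1) ^ 2 / 4 = i * (i + 1) := by
    rw [show (2 * i + 1) ^ 2 = 1 + i * (i + 1) * 4 by ring, Nat.add_mul_div_right _ _ four_pos]
    norm_num
  unfold floorSqSum floorPronicSum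
  simp only [hdiv]
  rw [show 2 ^ (n + 2) = 2 * 2 ^ (n + 1) by ring, sum_range_two_mul_eq_sum_even_add_odd]
  simp only [heven, hodd, sum_add_distrib]
  rw [show 2 ^ (n + 1) = 2 * 2 ^ n by ring,
    sum_range_two_mul_div hN (fun i ↦ i ^ 2) (fun r ↦ 2 * r + 2 ^ n) fun r ↦ by ring,
    sum_range_two_mul_div hN (fun i ↦ i * (i + 1)) (fun r ↦ 2 * r + 2 ^ n + 1) fun r ↦ by ring]
  simp only [sum_add_distrib, sum_const, card_range, smul_eq_mul]
  rw [← mul_sum]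
  have hgauss := sum_range_id_mul_two (2 ^ n)
  zify [Nat.one_le_two_pow] at hgauss ⊢
  have hfour : (4 : ℤ) ^ n = 2 ^ n * 2 ^ n := by rw [← mul_pow]; norm_num
  linear_combination 2 * hgauss - 4 * hfour

noncomputable def sqrtTerm (n : ℕ) : ℝ := if Even n then 3 * √(2 ^ n) / 2 else √(2 * 2 ^ n)

lemma sqrtTerm_add_two (n : ℕ) : sqrtTerm (n + 2) = 2 * sqrtTerm n := by
  have hsqrt4 (x : ℝ) : √(4 * x) = 2 * √x := by
    rw [Real.sqrt_mul zero_le_four, show (4 : ℝ) = 2 ^ 2 by norm_num, Real.sqrt_sq zero_le_two]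
  unfold sqrtTerm
  rw [pow_add, show (2 : ℝ) ^ 2 = 4 by norm_num, mul_comm _ (4 : ℝ), mul_left_comm, hsqrt4, hsqrt4]
  simp only [Nat.even_add, even_two, iff_true]
  split_ifs <;> ring

lemma floorSqSum_eq (n : ℕ) (hn : 1 ≤ n) :
    (floorSqSum n : ℝ) = ((2 : ℝ) ^ n) ^ 2 / 3 - 2 ^ n + sqrtTerm n - 4 / 3 := by
  induction n using Nat.strong_induction_on with
  | _ n ih =>
    match n, hn with
    | 1, _ =>
      rw [show floorSqSum 1 = 0 by decide, sqrtTerm, if_neg (by decide),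
        show (2 : ℝ) * 2 ^ 1 = 2 ^ 2 by norm_num, Real.sqrt_sq zero_le_two]
      norm_num
    | 2, _ =>
      rw [show floorSqSum 2 = 3 by decide, sqrtTerm, if_pos (by decide), Real.sqrt_sq zero_le_two]
      norm_num
    | m + 3, _ =>
      have hrec : (floorSqSum (m + 3) : ℝ) + 2 ^ (m + 1)
          = 2 * floorSqSum (m + 1) + 2 * floorPronicSum (m + 1) + 4 ^ (m + 2) := by
        exact_mod_cast floorSqSum_add_two (m + 1)
      have hpronic : 3 * (floorPronicSum (m + 1) : ℝ) + 3 * 2 ^ m = 4 ^ (m + 1) + 2 := by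
        exact_mod_cast three_mul_floorPronicSum_succ m
      rw [ih (m + 1) (by omega) (by omega)] at hrec
      rw [sqrtTerm_add_two]
      have hfour : (4 : ℝ) ^ m = (2 ^ m) ^ 2 := by rw [← pow_mul, mul_comm, pow_mul]; norm_num
      linear_combination hrec + 2 / 3 * hpronic + 56 / 3 * hfour

theorem floor_sum_squares (n k : ℕ) (hn : 1 ≤ n) (hk : k = 2 ^ n) :
    ((∑ j ∈ Finset.range k, j ^ 2 / k : ℕ) : ℝ)
      = if Even n then (k : ℝ) ^ 2 / 3 - (k : ℝ) + 3 * Real.sqrt (k : ℝ) / 2 - 4 / 3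
        else (k : ℝ) ^ 2 / 3 - (k : ℝ) + Real.sqrt (2 * (k : ℝ)) - 4 / 3 := by
  subst hk
  change (floorSqSum n : ℝ) = _
  rw [floorSqSum_eq n hn, sqrtTerm]
  push_cast
  split_ifs <;> ring
end

section
/- The number of descents of the bit-reversal permutation π_n on [k] (k=2^n, n≥1) is k/2; moreover, the descents are exactly the odd indices, so the major index (sum of descent positions) equals k²/4. Also there is no index j with π_n(j) > π_n(j+1) > π_n(j+2). -/
/-!
The leading bit of `bitrev (m + 1) j` is the parity bit of `j`, so `bitrev (m + 1) j < 2 ^ m`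
exactly when `j` is even. Cyclically consecutive indices modulo the even number `2 ^ (m + 1)`
alternate in parity, hence a descent occurs exactly at the odd positions, never twice in a row,
and counting odd numbers below `2c` gives `c` of them with sum `c ^ 2`.
-/

/-- The bit-reversal permutation on `n` bits: reverses the binary digits of `j`. -/
def bitrev (n j : ℕ) : ℕ := ∑ i ∈ Finset.range n, (j / 2 ^ i % 2) * 2 ^ (n - 1 - i)

lemma bitrev_succ (n j : ℕ) : bitrev (n + 1) j = j % 2 * 2 ^ n + bitrev n (j / 2) := by
  unfold bitrev
  rw [Finset.sum_range_succ', add_comm]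
  simp only [pow_zero, Nat.div_one, Nat.add_sub_cancel, Nat.sub_zero]
  congr 1
  refine Finset.sum_congr rfl fun i _ => ?_
  rw [Nat.div_div_eq_div_mul, ← pow_succ', show n - (i + 1) = n - 1 - i by omega]

lemma bitrev_lt (n j : ℕ) : bitrev n j < 2 ^ n := by
  induction n generalizing j with
  | zero => simp [bitrev]
  | succ m ih =>
    rw [bitrev_succ, pow_succ]
    have := ih (j / 2)
    have : j % 2 ≤ 1 := by omega
    nlinarith

lemma bitrev_succ_lt_iff_even (m j : ℕ) : bitrev (m + 1) j < 2 ^ m ↔ Even j := by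
  rw [bitrev_succ, Nat.even_iff]
  have := bitrev_lt m (j / 2)
  rcases Nat.mod_two_eq_zero_or_one j with h | h <;> simp [h, this]

section CyclicDescents

variable {f : ℕ → ℕ} {c k : ℕ}

lemma apply_succ_mod_lt_iff_odd (hf : ∀ j, f j < c ↔ Even j) (hk : Even k) (i : ℕ) :
    f ((i + 1) % k) < f i ↔ Odd i := by
  have hi := hf i
  have hnext := hf ((i + 1) % k)
  rw [Even.mod_even_iff hk, Nat.even_add_one] at hnext
  rw [← Nat.not_even_iff_odd]
  by_cases he : Even i <;> simp only [he, not_true, not_false_iff, iff_true, iff_false] at * <;>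
    omega

lemma not_apply_succ_mod_lt_and_apply_add_two_mod_lt (hf : ∀ j, f j < c ↔ Even j) (hk : Even k)
    (j : ℕ) :
    ¬ (f ((j + 1) % k) < f j ∧ f ((j + 2) % k) < f ((j + 1) % k)) := by
  rintro ⟨hj, hj'⟩
  rw [show (j + 2) % k = ((j + 1) % k + 1) % k by rw [Nat.mod_add_mod],
    apply_succ_mod_lt_iff_odd hf hk, Odd.mod_even_iff hk, Nat.odd_add_one] at hj'
  exact hj' ((apply_succ_mod_lt_iff_odd hf hk j).1 hj)

end CyclicDescents

lemma filter_odd_range_two_mul_succ (c : ℕ) :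
    (Finset.range (2 * (c + 1))).filter Odd =
      insert (2 * c + 1) ((Finset.range (2 * c)).filter Odd) := by
  have hodd : Odd (2 * c + 1) := odd_two_mul_add_one c
  have heven : ¬ Odd (2 * c) := Nat.not_odd_iff_even.2 (even_two_mul c)
  rw [mul_add_one, Finset.range_add_one, Finset.range_add_one, Finset.filter_insert,
    Finset.filter_insert, if_pos hodd, if_neg heven]

lemma card_filter_odd_range_two_mul (c : ℕ) : ((Finset.range (2 * c)).filter Odd).card = c := by
  induction c with
  | zero => simp
  | succ c ih =>
    rw [filter_odd_range_two_mul_succ, Finset.card_insert_of_notMem (by simp), ih]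

lemma sum_filter_odd_range_two_mul (c : ℕ) :
    ∑ i ∈ (Finset.range (2 * c)).filter Odd, i = c ^ 2 := by
  induction c with
  | zero => simp
  | succ c ih =>
    rw [filter_odd_range_two_mul_succ, Finset.sum_insert (by simp), ih]
    ring

theorem bitrev_descents (n k : ℕ) (hn : 1 ≤ n) (hk : k = 2 ^ n) :
    (Finset.filter (fun i => bitrev n ((i + 1) % k) < bitrev n i) (Finset.range k)).card
        = k / 2
    ∧ Finset.filter (fun i => bitrev n ((i + 1) % k) < bitrev n i) (Finset.range k)
        = Finset.filter (fun i => Odd i) (Finset.range k)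
    ∧ (∑ i ∈ Finset.filter (fun i => bitrev n ((i + 1) % k) < bitrev n i)
          (Finset.range k), i) = k ^ 2 / 4
    ∧ ¬ ∃ j < k, bitrev n ((j + 1) % k) < bitrev n j
          ∧ bitrev n ((j + 2) % k) < bitrev n ((j + 1) % k) := by
  obtain ⟨m, rfl⟩ : ∃ m, n = m + 1 := ⟨n - 1, by omega⟩
  have hpow : 2 ^ (m + 1) = 2 * 2 ^ m := pow_succ' 2 m
  have heven : Even k := hk ▸ hpow ▸ even_two_mul _
  have hfilter : Finset.filter (fun i => bitrev (m + 1) ((i + 1) % k) < bitrev (m + 1) i)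
      (Finset.range k) = Finset.filter (fun i => Odd i) (Finset.range k) :=
    Finset.filter_congr fun i _ => apply_succ_mod_lt_iff_odd (bitrev_succ_lt_iff_even m) heven i
  refine ⟨?_, hfilter, ?_, fun ⟨j, _, hj⟩ =>
    not_apply_succ_mod_lt_and_apply_add_two_mod_lt (bitrev_succ_lt_iff_even m) heven j hj⟩
  · rw [hfilter, hk, hpow, card_filter_odd_range_two_mul]
    omega
  · rw [hfilter, hk, hpow, sum_filter_odd_range_two_mul, mul_pow]
    omega
end
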